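/- For every λ > 0 the function φ_λ(x) = √λ √(sech((2/√3)λx)) satisfies E(φ_λ, ℝ) = 0, where E(u,ℝ) = (1/2)∫_ℝ |u'|² dx - (1/6)∫_ℝ |u|⁶ dx. -/

import Mathlib

/-!
Write `c = 2λ/√3`. Then `φ_λ'² = λc²/4 · sinh²(cx)/cosh³(cx)` and `φ_λ⁶ = λ³/cosh³(cx)`, so after
the substitution `s = cx` both terms of the energy are multiples of `∫ sinh²/cosh³` and
`∫ 1/cosh³`. Both integrals equal `π/2`, with antiderivatives `(arctan sinh ∓ sinh/cosh²)/2`.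
The energy is then `πλ/16 · (c - 4λ²/(3c))`, which vanishes because `3c² = 4λ²`.
-/

open Real MeasureTheory Filter Topology

theorem integrable_of_hasDerivAt_of_nonneg {g g' : ℝ → ℝ} {m n : ℝ}
    (hderiv : ∀ x, HasDerivAt g (g' x) x) (hg' : ∀ x, 0 ≤ g' x)
    (hbot : Tendsto g atBot (𝓝 m)) (htop : Tendsto g atTop (𝓝 n)) : Integrable g' := by
  have hint : ∀ a b, IntegrableOn g' (Set.Ioc a b) := fun a b =>
    intervalIntegral.integrableOn_deriv_of_nonneg
      (fun x _ => (hderiv x).continuousAt.continuousWithinAt) (fun x _ => hderiv x)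
      (fun x _ => hg' x)
  have hftc : ∀ a b, ∫ x in a..b, ‖g' x‖ = g b - g a := fun a b => by
    simp_rw [norm_of_nonneg (hg' _)]
    exact intervalIntegral.integral_eq_sub_of_hasDerivAt (fun x _ => hderiv x)
      ⟨hint a b, hint b a⟩
  refine integrable_of_intervalIntegral_norm_tendsto (n - m) (fun i : ℝ × ℝ => hint i.1 i.2)
    (tendsto_fst (g := atTop)) (tendsto_snd (f := atBot)) ?_
  simp_rw [hftc]
  exact (htop.comp tendsto_snd).sub (hbot.comp tendsto_fst)

theorem integral_of_hasDerivAt_of_nonneg {g g' : ℝ → ℝ} {m n : ℝ}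
    (hderiv : ∀ x, HasDerivAt g (g' x) x) (hg' : ∀ x, 0 ≤ g' x)
    (hbot : Tendsto g atBot (𝓝 m)) (htop : Tendsto g atTop (𝓝 n)) : ∫ x, g' x = n - m :=
  integral_of_hasDerivAt_of_tendsto hderiv
    (integrable_of_hasDerivAt_of_nonneg hderiv hg' hbot htop) hbot htop

namespace Real

theorem abs_le_cosh (x : ℝ) : |x| ≤ cosh x := by
  rw [← cosh_abs]
  exact (self_le_sinh_iff.2 (abs_nonneg x)).trans (sinh_lt_cosh _).le

theorem abs_sinh_le_cosh (x : ℝ) : |sinh x| ≤ cosh x := by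
  rw [abs_sinh, ← cosh_abs]
  exact (sinh_lt_cosh _).le

theorem tendsto_cosh_cocompact : Tendsto cosh (cocompact ℝ) atTop :=
  tendsto_atTop_mono (fun x => (norm_eq_abs x).trans_le (abs_le_cosh x))
    tendsto_norm_cocompact_atTop

theorem tendsto_sinh_div_cosh_sq_cocompact :
    Tendsto (fun x => sinh x / cosh x ^ 2) (cocompact ℝ) (𝓝 0) := by
  refine squeeze_zero_norm (a := fun x => (cosh x)⁻¹) (fun x => ?_)
    tendsto_cosh_cocompact.inv_tendsto_atTop
  have hx := cosh_pos x
  rw [norm_div, norm_pow, norm_of_nonneg hx.le, div_le_iff₀ (by positivity), sq,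
    ← mul_assoc, inv_mul_cancel₀ hx.ne', one_mul, Real.norm_eq_abs]
  exact abs_sinh_le_cosh x

theorem tendsto_sinh_atTop : Tendsto sinh atTop atTop :=
  tendsto_atTop_mono' _ ((eventually_ge_atTop 0).mono fun _ => self_le_sinh_iff.2) tendsto_id

theorem tendsto_sinh_atBot : Tendsto sinh atBot atBot :=
  tendsto_atBot_mono' _ ((eventually_le_atBot 0).mono fun _ => sinh_le_self_iff.2) tendsto_id

theorem tendsto_arctan_sinh_atTop : Tendsto (fun x => arctan (sinh x)) atTop (𝓝 (π / 2)) :=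
  (tendsto_nhds_of_tendsto_nhdsWithin tendsto_arctan_atTop).comp tendsto_sinh_atTop

theorem tendsto_arctan_sinh_atBot :
    Tendsto (fun x => arctan (sinh x)) atBot (𝓝 (-(π / 2))) :=
  (tendsto_nhds_of_tendsto_nhdsWithin tendsto_arctan_atBot).comp tendsto_sinh_atBot

theorem hasDerivAt_arctan_sinh (x : ℝ) :
    HasDerivAt (fun x => arctan (sinh x)) (cosh x)⁻¹ x := by
  refine (hasDerivAt_sinh x).arctan.congr_deriv ?_
  rw [← cosh_sq', sq, one_div, mul_inv, inv_mul_cancel_right₀ (cosh_pos x).ne']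

theorem hasDerivAt_sinh_div_cosh_sq (x : ℝ) :
    HasDerivAt (fun x => sinh x / cosh x ^ 2) (2 / cosh x ^ 3 - (cosh x)⁻¹) x := by
  have hx := (cosh_pos x).ne'
  refine ((hasDerivAt_sinh x).fun_div ((hasDerivAt_cosh x).fun_pow 2)
    (pow_ne_zero 2 hx)).congr_deriv ?_
  field_simp
  rw [sinh_sq]
  push_cast
  ring

theorem integral_one_div_cosh_pow_three : ∫ x, 1 / cosh x ^ 3 = π / 2 := by
  have hderiv (x : ℝ) : HasDerivAt (fun x => (sinh x / cosh x ^ 2 + arctan (sinh x)) / 2)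
      (1 / cosh x ^ 3) x :=
    (((hasDerivAt_sinh_div_cosh_sq x).add (hasDerivAt_arctan_sinh x)).div_const 2).congr_deriv
      (by ring)
  have hbot := ((tendsto_sinh_div_cosh_sq_cocompact.mono_left atBot_le_cocompact).add
    tendsto_arctan_sinh_atBot).div_const 2
  have htop := ((tendsto_sinh_div_cosh_sq_cocompact.mono_left atTop_le_cocompact).add
    tendsto_arctan_sinh_atTop).div_const 2
  rw [integral_of_hasDerivAt_of_nonneg hderiv (fun x => by positivity [cosh_pos x]) hbot htop]
  ring

theorem integral_sinh_sq_div_cosh_pow_three : ∫ x, sinh x ^ 2 / cosh x ^ 3 = π / 2 := by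
  have hderiv (x : ℝ) : HasDerivAt (fun x => (arctan (sinh x) - sinh x / cosh x ^ 2) / 2)
      (sinh x ^ 2 / cosh x ^ 3) x := by
    refine (((hasDerivAt_arctan_sinh x).sub (hasDerivAt_sinh_div_cosh_sq x)).div_const
      2).congr_deriv ?_
    have := (cosh_pos x).ne'
    field_simp
    rw [sinh_sq]
    ring
  have hbot := (tendsto_arctan_sinh_atBot.sub
    (tendsto_sinh_div_cosh_sq_cocompact.mono_left atBot_le_cocompact)).div_const 2
  have htop := (tendsto_arctan_sinh_atTop.sub
    (tendsto_sinh_div_cosh_sq_cocompact.mono_left atTop_le_cocompact)).div_const 2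
  rw [integral_of_hasDerivAt_of_nonneg hderiv (fun x => by positivity [cosh_pos x]) hbot htop]
  ring

theorem hasDerivAt_sqrt_one_div_cosh (x : ℝ) :
    HasDerivAt (fun x => √(1 / cosh x)) (-sinh x / cosh x ^ 2 / (2 * √(1 / cosh x))) x := by
  have hx := (cosh_pos x).ne'
  refine ((((hasDerivAt_const x 1).fun_div (hasDerivAt_cosh x) hx).sqrt
    (by positivity [cosh_pos x])).congr_deriv ?_)
  ring

theorem deriv_sqrt_one_div_cosh_sq (x : ℝ) :
    deriv (fun x => √(1 / cosh x)) x ^ 2 = sinh x ^ 2 / cosh x ^ 3 / 4 := by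
  have hx := cosh_pos x
  rw [(hasDerivAt_sqrt_one_div_cosh x).deriv, div_pow, div_pow, mul_pow,
    sq_sqrt (by positivity), neg_sq]
  field_simp
  ring

end Real

theorem sqrt_pow_six {x : ℝ} (hx : 0 ≤ x) : √x ^ 6 = x ^ 3 := by
  rw [show 6 = 2 * 3 by rfl, pow_mul, sq_sqrt hx]

theorem deriv_mul_sqrt_one_div_cosh_mul_sq (a c x : ℝ) :
    deriv (fun y => a * √(1 / cosh (c * y))) x ^ 2
      = a ^ 2 * c ^ 2 * (sinh (c * x) ^ 2 / cosh (c * x) ^ 3 / 4) := by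
  rw [deriv_const_mul_field, deriv_comp_mul_left c (fun x => √(1 / cosh x)) x, smul_eq_mul,
    mul_pow, mul_pow, deriv_sqrt_one_div_cosh_sq, mul_assoc]

theorem integral_deriv_mul_sqrt_one_div_cosh_mul_sq (a c : ℝ) :
    ∫ x, deriv (fun y => a * √(1 / cosh (c * y))) x ^ 2 = a ^ 2 * |c| * π / 8 := by
  simp_rw [deriv_mul_sqrt_one_div_cosh_mul_sq]
  rw [integral_const_mul, Measure.integral_comp_mul_left (fun s => sinh s ^ 2 / cosh s ^ 3 / 4),
    integral_div, integral_sinh_sq_div_cosh_pow_three, smul_eq_mul, abs_inv, ← sq_abs c]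
  have : |c| ^ 2 * |c|⁻¹ = |c| := by rw [sq, mul_self_mul_inv]
  linear_combination (a ^ 2 * π / 8) * this

-- For `c = 0` both sides are `0`: a nonzero constant is not integrable on `ℝ`.
theorem integral_mul_sqrt_one_div_cosh_mul_pow_six (a c : ℝ) :
    ∫ x, (a * √(1 / cosh (c * x))) ^ 6 = a ^ 6 * |c|⁻¹ * (π / 2) := by
  simp_rw [mul_pow, sqrt_pow_six (one_div_pos.2 (cosh_pos _)).le, div_pow, one_pow]
  rw [integral_const_mul, Measure.integral_comp_mul_left (fun s => 1 / cosh s ^ 3),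
    integral_one_div_cosh_pow_three, smul_eq_mul, abs_inv, mul_assoc]

/-- the critical soliton has zero energy:
`E(φ_λ, ℝ) = (1/2)∫|φ_λ'|² - (1/6)∫|φ_λ|⁶ = 0` for every `λ > 0`. -/
theorem critical_soliton_zero_energy (lam : ℝ) (hlam : 0 < lam) :
    (1 / 2) * (∫ x : ℝ, (deriv (fun y : ℝ =>
        Real.sqrt lam * Real.sqrt (1 / Real.cosh ((2 / Real.sqrt 3) * lam * y))) x) ^ 2)
      - (1 / 6) * (∫ x : ℝ,
        (Real.sqrt lam * Real.sqrt (1 / Real.cosh ((2 / Real.sqrt 3) * lam * x))) ^ 6)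
      = 0 := by
  have hc : 0 < 2 / √3 * lam := by positivity
  rw [integral_deriv_mul_sqrt_one_div_cosh_mul_sq, integral_mul_sqrt_one_div_cosh_mul_pow_six,
    abs_of_pos hc, sq_sqrt hlam.le, sqrt_pow_six hlam.le]
  field_simp
  rw [sq_sqrt (by norm_num : (0:ℝ) ≤ 3)]
  ring
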